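/- For n = 3, as ε → 0⁺, ∫_{|y|≤1} dy/(ε + |y|²) = C₀ - 2π²√ε + o(√ε), with C₀ = ∫_{|y|≤1} dy/|y|² = 4π. -/

import Mathlib

open MeasureTheory Real Filter Asymptotics

private lemma volume_unit_ball_dim3 :
    (volume (Metric.ball (0 : EuclideanSpace ℝ (Fin 3)) 1)).toReal = 4 * π / 3 := by
  rw [EuclideanSpace.volume_ball]
  simp only [Fintype.card_fin]
  rw [show ((3:ℕ):ℝ)/2 + 1 = 3/2 + 1 by norm_num]
  rw [Real.Gamma_add_one (by norm_num), show (3:ℝ)/2 = 1/2 + 1 by norm_num,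
    Real.Gamma_add_one (by norm_num), Real.Gamma_one_half_eq]
  rw [ENNReal.ofReal_one, one_pow, one_mul, ENNReal.toReal_ofReal (by positivity)]
  rw [show Real.sqrt π ^ 3 = π * Real.sqrt π by
    rw [pow_succ, sq, Real.mul_self_sqrt Real.pi_pos.le]]
  have h := Real.sqrt_pos.2 Real.pi_pos
  field_simp
  ring

private lemma radial_integral (ε : ℝ) (hε : 0 < ε) :
    ∫ r in (0:ℝ)..1, r^2 / (ε + r^2) = 1 - Real.sqrt ε * Real.arctan (1 / Real.sqrt ε) := by
  have hs : 0 < Real.sqrt ε := Real.sqrt_pos.2 hε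
  have key : ∀ r : ℝ, HasDerivAt (fun r => r - Real.sqrt ε * Real.arctan (r / Real.sqrt ε))
      (r^2 / (ε + r^2)) r := by
    intro r
    have h1 : HasDerivAt (fun r : ℝ => r / Real.sqrt ε) (1 / Real.sqrt ε) r := by
      simpa using (hasDerivAt_id r).div_const (Real.sqrt ε)
    have h2 := (Real.hasDerivAt_arctan (r / Real.sqrt ε)).comp r h1
    have h3 := (hasDerivAt_id r).sub (h2.const_mul (Real.sqrt ε))
    refine h3.congr_deriv ?_
    have hε2 : Real.sqrt ε ^ 2 = ε := Real.sq_sqrt hε.le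
    have hd : 0 < ε + r ^ 2 := by positivity
    field_simp
    nlinarith [hε2, sq_nonneg r]
  rw [intervalIntegral.integral_eq_sub_of_hasDerivAt (fun r _ => key r) ?_]
  · simp
  · apply Continuous.intervalIntegrable
    exact (continuous_pow 2).div (by continuity) (fun r => by positivity)

private lemma ball_integral (ε : ℝ) (hε : 0 < ε) :
    (∫ y in Metric.closedBall (0 : EuclideanSpace ℝ (Fin 3)) 1, (ε + ‖y‖ ^ 2)⁻¹)
      = 4 * π * (1 - Real.sqrt ε * Real.arctan (1 / Real.sqrt ε)) := by
  set E := EuclideanSpace ℝ (Fin 3)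
  have hdim : Module.finrank ℝ E = 3 := by simp [E, finrank_euclideanSpace]
  have h1 : (∫ y in Metric.closedBall (0 : E) 1, (ε + ‖y‖ ^ 2)⁻¹)
      = ∫ y : E, Set.indicator (Set.Iic 1) (fun r : ℝ => (ε + r ^ 2)⁻¹) ‖y‖ := by
    rw [← integral_indicator measurableSet_closedBall]
    congr 1 with y
    classical
    rw [Set.indicator_apply, Set.indicator_apply]
    simp [mem_closedBall_zero_iff]
  have h2 := integral_fun_norm_addHaar (volume : Measure E)
      (Set.indicator (Set.Iic 1) (fun r : ℝ => (ε + r ^ 2)⁻¹))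
  rw [hdim] at h2
  rw [h1, h2]
  have h3 : (∫ y in Set.Ioi (0:ℝ), y ^ (3-1) •
      Set.indicator (Set.Iic 1) (fun r : ℝ => (ε + r ^ 2)⁻¹) y)
      = ∫ r in (0:ℝ)..1, r^2 / (ε + r^2) := by
    have : ∀ y : ℝ, y ^ (3-1) • Set.indicator (Set.Iic 1) (fun r : ℝ => (ε + r ^ 2)⁻¹) y
        = Set.indicator (Set.Iic 1) (fun r : ℝ => r^2 / (ε + r^2)) y := by
      intro y
      by_cases hy : y ∈ Set.Iic (1:ℝ) <;>
        simp [Set.indicator_of_mem, Set.indicator_of_notMem, hy, div_eq_mul_inv, smul_eq_mul]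
    simp_rw [this]
    rw [integral_indicator measurableSet_Iic, Measure.restrict_restrict measurableSet_Iic,
      intervalIntegral.integral_of_le zero_le_one]
    congr 1
    rw [Set.Iic_inter_Ioi]
  rw [h3, radial_integral ε hε, measureReal_def, volume_unit_ball_dim3]
  simp only [smul_eq_mul, nsmul_eq_mul]
  ring

/-- For `n = 3`: as `ε → 0⁺`,
`∫_{|y| ≤ 1} (ε + |y|²)⁻¹ dy = 4π - 2π²√ε + o(√ε)`. -/
theorem stmt_13 :
    (fun ε : ℝ =>
        (∫ y in Metric.closedBall (0 : EuclideanSpace ℝ (Fin 3)) 1,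
            (ε + ‖y‖ ^ 2)⁻¹) -
          (4 * Real.pi - 2 * Real.pi ^ 2 * Real.sqrt ε)) =o[nhdsWithin 0 (Set.Ioi 0)]
      fun ε : ℝ => Real.sqrt ε := by
  have heq : ∀ ε ∈ Set.Ioi (0:ℝ),
      (∫ y in Metric.closedBall (0 : EuclideanSpace ℝ (Fin 3)) 1, (ε + ‖y‖ ^ 2)⁻¹) -
        (4 * Real.pi - 2 * Real.pi ^ 2 * Real.sqrt ε)
      = (4 * π * Real.arctan (Real.sqrt ε)) * Real.sqrt ε := by
    intro ε hε
    rw [ball_integral ε hε]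
    rw [show (1:ℝ) / Real.sqrt ε = (Real.sqrt ε)⁻¹ by rw [one_div]]
    rw [Real.arctan_inv_of_pos (Real.sqrt_pos.2 hε)]
    ring
  have hten : Tendsto (fun ε : ℝ => 4 * π * Real.arctan (Real.sqrt ε))
      (nhdsWithin 0 (Set.Ioi 0)) (nhds 0) := by
    have : Continuous (fun ε : ℝ => 4 * π * Real.arctan (Real.sqrt ε)) := by continuity
    have h := (this.tendsto 0).mono_left
      (nhdsWithin_le_nhds (s := Set.Ioi (0:ℝ)))
    simpa using h
  have ho : (fun ε : ℝ => (4 * π * Real.arctan (Real.sqrt ε)) * Real.sqrt ε)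
      =o[nhdsWithin 0 (Set.Ioi 0)] fun ε : ℝ => Real.sqrt ε := by
    have hc : (fun ε : ℝ => 4 * π * Real.arctan (Real.sqrt ε))
        =o[nhdsWithin 0 (Set.Ioi 0)] (fun _ : ℝ => (1:ℝ)) :=
      (Asymptotics.isLittleO_one_iff ℝ).mpr hten
    simpa using hc.mul_isBigO (Asymptotics.isBigO_refl (fun ε : ℝ => Real.sqrt ε) _)
  exact ho.congr' (by filter_upwards [self_mem_nhdsWithin] with ε hε using (heq ε hε).symm)
    EventuallyEq.rfl
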